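/- arXiv:math-ph/0307002 — 3 statements merged into one kernel-verified Lean document; each statement's English description precedes it below -/
import Mathlib

section
/- Let P and Q be orthogonal projections on a Hilbert space with ‖P − Q‖ < 1. Then the pair (P,Q) is Fredholm and ind(P,Q) = 0. -/
def IsFredholmOp {E F : Type*} [NormedAddCommGroup E] [NormedSpace ℂ E]
    [NormedAddCommGroup F] [NormedSpace ℂ F] (T : E →L[ℂ] F) : Prop :=
  FiniteDimensional ℂ (LinearMap.ker (T : E →ₗ[ℂ] F)) ∧
    FiniteDimensional ℂ (F ⧸ LinearMap.range (T : E →ₗ[ℂ] F)) ∧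
    IsClosed (LinearMap.range (T : E →ₗ[ℂ] F) : Set F)

/-- The operator `T = QP : Ran P → Ran Q` associated to a pair of projections. -/
noncomputable def projPairOp {H : Type*} [NormedAddCommGroup H] [InnerProductSpace ℂ H]
    [CompleteSpace H] (P Q : H →L[ℂ] H) :
    (LinearMap.range (P : H →ₗ[ℂ] H)) →L[ℂ] (LinearMap.range (Q : H →ₗ[ℂ] H)) :=
  ContinuousLinearMap.codRestrict (Q.comp (LinearMap.range (P : H →ₗ[ℂ] H)).subtypeL)
    (LinearMap.range (Q : H →ₗ[ℂ] H)) (fun x => ⟨(x : H), rfl⟩)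

/-!
For `x ∈ Ran P` we have `x - Qx = (P - Q)x`, so `‖QPx‖ ≥ (1 - ‖P - Q‖)‖x‖`: the operator
`T = QP : Ran P → Ran Q` is bounded below, hence injective with closed range. If `y ∈ Ran Q` is
orthogonal to `Ran T`, self-adjointness gives `⟪x, Py⟫ = ⟪QPx, y⟫ = 0` for all `x`, so `Py = 0`;
the same estimate with `P` and `Q` exchanged then forces `y = 0`. Thus `T` is bijective.
-/

open ContinuousLinearMap

theorem one_sub_norm_sub_mul_norm_le_norm_apply {𝕜 E : Type*} [NontriviallyNormedField 𝕜]
    [NormedAddCommGroup E] [NormedSpace 𝕜 E] {P Q : E →L[𝕜] E} {x : E} (hx : P x = x) :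
    (1 - ‖P - Q‖) * ‖x‖ ≤ ‖Q x‖ := by
  have h := (P - Q).le_opNorm x
  rw [sub_apply, hx] at h
  linarith [norm_le_norm_add_norm_sub' x (Q x)]

theorem apply_eq_zero_of_forall_inner_comp_eq_zero {𝕜 E : Type*} [RCLike 𝕜]
    [NormedAddCommGroup E] [InnerProductSpace 𝕜 E] [CompleteSpace E] {P Q : E →L[𝕜] E}
    (hPsa : IsSelfAdjoint P) (hQsa : IsSelfAdjoint Q) {y : E} (hy : Q y = y)
    (horth : ∀ x, inner 𝕜 (Q (P x)) y = 0) : P y = 0 := by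
  have h := horth (P y)
  have hQ := hQsa.isSymmetric (P (P y)) y
  have hP := hPsa.isSymmetric (P y) y
  simp only [coe_coe, hy] at hQ hP
  rw [hQ, hP] at h
  exact inner_self_eq_zero.1 h

theorem isFredholmOp_of_bijective {E F : Type*} [NormedAddCommGroup E] [NormedSpace ℂ E]
    [NormedAddCommGroup F] [NormedSpace ℂ F] {T : E →L[ℂ] F} (hT : Function.Bijective T) :
    IsFredholmOp T := by
  have hrange : LinearMap.range (T : E →ₗ[ℂ] F) = ⊤ := LinearMap.range_eq_top.2 hT.2
  refine ⟨?_, ?_, ?_⟩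
  · rw [LinearMap.ker_eq_bot.2 hT.1]
    infer_instance
  · rw [hrange]
    infer_instance
  · rw [hrange]
    exact isClosed_univ

section projPairOp

variable {H : Type*} [NormedAddCommGroup H] [InnerProductSpace ℂ H] [CompleteSpace H]
  {P Q : H →L[ℂ] H}

theorem antilipschitzWith_projPairOp (hPidem : IsIdempotentElem P) (hnorm : ‖P - Q‖ < 1) :
    AntilipschitzWith (1 - ‖P - Q‖)⁻¹.toNNReal (projPairOp P Q) := by
  have hpos : 0 < 1 - ‖P - Q‖ := by linarith
  refine (projPairOp P Q).antilipschitz_of_bound fun x => ?_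
  have hx : P x = x := (LinearMap.IsIdempotentElem.mem_range_iff hPidem.toLinearMap).1 x.2
  rw [Real.coe_toNNReal _ (inv_nonneg.2 hpos.le), inv_mul_eq_div, le_div_iff₀' hpos]
  exact one_sub_norm_sub_mul_norm_le_norm_apply hx

theorem orthogonal_range_projPairOp_eq_bot (hPsa : IsSelfAdjoint P) (hQsa : IsSelfAdjoint Q)
    (hQidem : IsIdempotentElem Q) (hnorm : ‖P - Q‖ < 1) :
    (LinearMap.range (projPairOp P Q).toLinearMap)ᗮ = ⊥ := by
  refine (Submodule.eq_bot_iff _).2 fun y hy => ?_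
  have hQy : Q y = y := (LinearMap.IsIdempotentElem.mem_range_iff hQidem.toLinearMap).1 y.2
  have hPy : P y = 0 := by
    refine apply_eq_zero_of_forall_inner_comp_eq_zero hPsa hQsa hQy fun x => ?_
    have hPx : P x ∈ LinearMap.range (P : H →ₗ[ℂ] H) := ⟨x, rfl⟩
    exact (Submodule.mem_orthogonal _ _).1 hy _ ⟨⟨P x, hPx⟩, rfl⟩
  have hpos : 0 < 1 - ‖P - Q‖ := by linarith
  have hle : (1 - ‖P - Q‖) * ‖(y : H)‖ ≤ 0 := by
    simpa [hPy, norm_sub_rev] using one_sub_norm_sub_mul_norm_le_norm_apply (P := Q) (Q := P) hQy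
  exact Subtype.ext (norm_le_zero_iff.1 (nonpos_of_mul_nonpos_right hle hpos))

theorem bijective_projPairOp (hPsa : IsSelfAdjoint P) (hPidem : IsIdempotentElem P)
    (hQsa : IsSelfAdjoint Q) (hQidem : IsIdempotentElem Q) (hnorm : ‖P - Q‖ < 1) :
    Function.Bijective (projPairOp P Q) := by
  have hanti := antilipschitzWith_projPairOp hPidem hnorm
  have : CompleteSpace (LinearMap.range (P : H →ₗ[ℂ] H)) :=
    hPidem.isClosed_range.completeSpace_coe
  have : CompleteSpace (LinearMap.range (Q : H →ₗ[ℂ] H)) :=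
    hQidem.isClosed_range.completeSpace_coe
  have : CompleteSpace (LinearMap.range (projPairOp P Q).toLinearMap) :=
    (hanti.isClosed_range (projPairOp P Q).uniformContinuous).completeSpace_coe
  refine ⟨hanti.injective, LinearMap.range_eq_top.1 (Submodule.orthogonal_eq_bot_iff.1 ?_)⟩
  exact orthogonal_range_projPairOp_eq_bot hPsa hQsa hQidem hnorm

end projPairOp

/-- orthogonal projections with `‖P − Q‖ < 1` form a Fredholm pair and
`ind(P,Q) = dim Ker T − dim (Ran T)ᗮ = 0`, where `T = QP : Ran P → Ran Q`. -/
theorem index_zero_of_norm_lt_one {H : Type*} [NormedAddCommGroup H]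
    [InnerProductSpace ℂ H] [CompleteSpace H]
    (P Q : H →L[ℂ] H)
    (hPsa : IsSelfAdjoint P) (hPidem : IsIdempotentElem P)
    (hQsa : IsSelfAdjoint Q) (hQidem : IsIdempotentElem Q)
    (hnorm : ‖P - Q‖ < 1) :
    IsFredholmOp (projPairOp P Q) ∧
      (Module.finrank ℂ (LinearMap.ker (projPairOp P Q).toLinearMap) : ℤ) -
        (Module.finrank ℂ ((LinearMap.range (projPairOp P Q).toLinearMap)ᗮ) : ℤ) = 0 := by
  have hbij := bijective_projPairOp hPsa hPidem hQsa hQidem hnorm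
  refine ⟨isFredholmOp_of_bijective hbij, ?_⟩
  rw [LinearMap.ker_eq_bot.2 hbij.1, LinearMap.range_eq_top.2 hbij.2,
    Submodule.top_orthogonal_eq_bot]
  simp
end

section
/- The Uehling function satisfies the closed-form identity: for k ≠ 0, (1/2)∫₀¹ (1−x²) log(1 + k²(1−x²)/4) dx = (1/3)[(1 − 2/k²)√(1 + 4/k²) · log((√(1+4/k²)+1)/(√(1+4/k²)−1)) + 4/k² − 5/3]. -/
/-!
With `s = √(1 + 4 / k²) > 1` the argument of the logarithm becomes `(s² - x²) / (s² - 1)`.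
Integrating `1 - x²` by parts against this logarithm leaves the integral of the rational function
`2x (x - x³/3) / (s² - x²)`; its polynomial part gives the cubic and linear terms of the
primitive below, and its remainder `2s² (3 - s²) / (3 (s² - x²))` gives the multiple of
`log ((s + x) / (s - x))`. The primitive vanishes at `0`, and at `1` its first term drops out
because the logarithm's argument is `1` there.
-/

open Real

noncomputable def uehlingPrimitive (s x : ℝ) : ℝ :=
  (x - x ^ 3 / 3) * log ((s ^ 2 - x ^ 2) / (s ^ 2 - 1)) + 2 / 9 * x ^ 3
    - 2 / 3 * (3 - s ^ 2) * x + s / 3 * (3 - s ^ 2) * log ((s + x) / (s - x))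

theorem hasDerivAt_uehlingPrimitive {s x : ℝ} (hs : s ^ 2 ≠ 1) (hx : x ^ 2 ≠ s ^ 2) :
    HasDerivAt (uehlingPrimitive s) ((1 - x ^ 2) * log ((s ^ 2 - x ^ 2) / (s ^ 2 - 1))) x := by
  have hs1 : s ^ 2 - 1 ≠ 0 := sub_ne_zero.mpr hs
  have hsx : s ^ 2 - x ^ 2 ≠ 0 := sub_ne_zero.mpr hx.symm
  have hp : s + x ≠ 0 := fun h => hsx (by linear_combination (s - x) * h)
  have hm : s - x ≠ 0 := fun h => hsx (by linear_combination (s + x) * h)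
  have hlog : HasDerivAt (fun x => log ((s ^ 2 - x ^ 2) / (s ^ 2 - 1)))
      (-2 * x / (s ^ 2 - x ^ 2)) x := by
    refine ((((hasDerivAt_pow 2 x).const_sub (s ^ 2)).div_const (s ^ 2 - 1)).log
      (div_ne_zero hsx hs1)).congr_deriv ?_
    field_simp
    ring
  have hartanh : HasDerivAt (fun x => log ((s + x) / (s - x))) (2 * s / (s ^ 2 - x ^ 2)) x := by
    refine ((((hasDerivAt_id' x).const_add s).div ((hasDerivAt_id' x).const_sub s) hm).log
      (div_ne_zero hp hm)).congr_deriv ?_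
    simp only [Pi.div_apply]
    field_simp
    ring
  have hcubic : HasDerivAt (fun x => x - x ^ 3 / 3) (1 - x ^ 2) x := by
    refine ((hasDerivAt_id' x).fun_sub ((hasDerivAt_pow 3 x).div_const 3)).congr_deriv ?_
    norm_num
  unfold uehlingPrimitive
  refine ((((hcubic.fun_mul hlog).fun_add ((hasDerivAt_pow 3 x).const_mul (2 / 9))).fun_sub
    ((hasDerivAt_id' x).const_mul (2 / 3 * (3 - s ^ 2)))).fun_add
      (hartanh.const_mul (s / 3 * (3 - s ^ 2)))).congr_deriv ?_
  field_simp
  ring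

theorem integral_one_sub_sq_mul_log {s : ℝ} (hs : 1 < s) :
    ∫ x in (0 : ℝ)..1, (1 - x ^ 2) * log ((s ^ 2 - x ^ 2) / (s ^ 2 - 1)) =
      2 / 9 - 2 / 3 * (3 - s ^ 2) + s / 3 * (3 - s ^ 2) * log ((s + 1) / (s - 1)) := by
  have hx : ∀ x ∈ Set.uIcc (0 : ℝ) 1, x ^ 2 < s ^ 2 := by
    intro x hx
    rw [Set.uIcc_of_le zero_le_one] at hx
    nlinarith [hx.1, hx.2]
  have hcont : ContinuousOn (fun x => (1 - x ^ 2) * log ((s ^ 2 - x ^ 2) / (s ^ 2 - 1)))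
      (Set.uIcc 0 1) := by
    refine ContinuousOn.mul (by fun_prop) (ContinuousOn.log (by fun_prop) fun x hx' => ?_)
    exact div_ne_zero (sub_ne_zero.mpr (hx x hx').ne') (by nlinarith)
  rw [intervalIntegral.integral_eq_sub_of_hasDerivAt
    (fun x hx' => hasDerivAt_uehlingPrimitive (by nlinarith) (hx x hx').ne)
    hcont.intervalIntegrable]
  simp [uehlingPrimitive, div_self (show s ^ 2 - 1 ≠ 0 by nlinarith)]

/-- closed-form Uehling–Serber identity for the Uehling function, `k ≠ 0`. -/
theorem uehling_closed_form (k : ℝ) (hk : k ≠ 0) :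
    (1 / 2) * ∫ x in (0 : ℝ)..1, (1 - x ^ 2) * Real.log (1 + k ^ 2 * (1 - x ^ 2) / 4) =
      (1 / 3) * ((1 - 2 / k ^ 2) * Real.sqrt (1 + 4 / k ^ 2) *
          Real.log ((Real.sqrt (1 + 4 / k ^ 2) + 1) / (Real.sqrt (1 + 4 / k ^ 2) - 1))
        + 4 / k ^ 2 - 5 / 3) := by
  set s := √(1 + 4 / k ^ 2)
  have hk4 : 0 < 4 / k ^ 2 := by positivity
  have hs2 : s ^ 2 = 1 + 4 / k ^ 2 := sq_sqrt (by positivity)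
  have hs : 1 < s := by rw [Real.lt_sqrt zero_le_one]; linarith
  have harg : ∀ x : ℝ, 1 + k ^ 2 * (1 - x ^ 2) / 4 = (s ^ 2 - x ^ 2) / (s ^ 2 - 1) := by
    intro x
    rw [hs2]
    field_simp
    ring
  simp only [harg, integral_one_sub_sq_mul_log hs]
  have h2k : 2 / k ^ 2 = (s ^ 2 - 1) / 2 := by rw [hs2]; ring
  have h4k : 4 / k ^ 2 = s ^ 2 - 1 := by rw [hs2]; ring
  rw [h2k, h4k]
  ring
end

section
/- Let A be a self-adjoint operator on a Hilbert space with spectral gap: γ ∉ σ(A), dist(γ, σ(A)) ≥ δ > 0. Then the integral (1/2π)∫_{−∞}^{∞} (A − γ + iη)^{−1} dη converges (as a strong improper integral) and equals (1/2) − P, where P = χ_{(−∞,γ)}(A) is the spectral projection onto the part of the spectrum below γ. -/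
/-!
For real `x`, `(x - γ + iη)⁻¹ = ((x - γ) - iη) / ((x - γ)² + η²)`, so the resolvent is the real
functional calculus of these real and imaginary parts. The imaginary part is odd in `η`, while
`∫_{-R}^{R} (x - γ) / ((x - γ)² + η²) dη = 2 arctan (R / (x - γ))`; since the integrands are
bounded by `δ⁻¹` on `σ(A)`, integration commutes with the calculus and
`(1/2π) ∫_{-R}^{R} (A - γ + iη)⁻¹ dη = g_R(A)` with `g_R(x) = π⁻¹ arctan (R / (x - γ))`.
On `σ(A)`, compact and away from `γ`, `g_R → 1/2 - χ_{(-∞,γ)}` uniformly with error at most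
`|x - γ| / R`, hence `g_R(A) → 1/2 - P` in norm.
-/

open Filter Set Function MeasureTheory Real

/-- `resolventRe γ η x + i * resolventIm γ η x = (x - γ + iη)⁻¹`. -/
noncomputable def resolventRe (γ η x : ℝ) : ℝ := (x - γ) / ((x - γ) ^ 2 + η ^ 2)

noncomputable def resolventIm (γ η x : ℝ) : ℝ := -η / ((x - γ) ^ 2 + η ^ 2)

lemma sub_sq_add_sq_pos {x γ : ℝ} (hx : x ≠ γ) (η : ℝ) : 0 < (x - γ) ^ 2 + η ^ 2 := by
  have := sub_ne_zero.2 hx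
  positivity

lemma continuousOn_uncurry_resolventRe {γ : ℝ} {s : Set ℝ} (hγ : γ ∉ s) :
    ContinuousOn (uncurry (resolventRe γ)) (univ ×ˢ s) :=
  .div (by fun_prop) (by fun_prop) fun p hp ↦
    (sub_sq_add_sq_pos (ne_of_mem_of_not_mem hp.2 hγ) _).ne'

lemma continuousOn_uncurry_resolventIm {γ : ℝ} {s : Set ℝ} (hγ : γ ∉ s) :
    ContinuousOn (uncurry (resolventIm γ)) (univ ×ˢ s) :=
  .div (by fun_prop) (by fun_prop) fun p hp ↦
    (sub_sq_add_sq_pos (ne_of_mem_of_not_mem hp.2 hγ) _).ne'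

lemma abs_resolventRe_le {γ δ x : ℝ} (hδ : 0 < δ) (hx : δ ≤ |x - γ|) (η : ℝ) :
    |resolventRe γ η x| ≤ δ⁻¹ := by
  have hpos := sub_sq_add_sq_pos (x := x) (γ := γ) (by rintro rfl; simp at hx; linarith) η
  rw [resolventRe, abs_div, abs_of_pos hpos, div_le_iff₀ hpos, le_inv_mul_iff₀ hδ]
  nlinarith [mul_le_mul_of_nonneg_right hx (abs_nonneg (x - γ)), sq_abs (x - γ), sq_nonneg η]

lemma abs_resolventIm_le {γ δ x : ℝ} (hδ : 0 < δ) (hx : δ ≤ |x - γ|) (η : ℝ) :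
    |resolventIm γ η x| ≤ δ⁻¹ := by
  have hpos := sub_sq_add_sq_pos (x := x) (γ := γ) (by rintro rfl; simp at hx; linarith) η
  rw [resolventIm, abs_div, abs_of_pos hpos, div_le_iff₀ hpos, le_inv_mul_iff₀ hδ, abs_neg]
  nlinarith [mul_le_mul_of_nonneg_right hx (abs_nonneg η), sq_abs (x - γ), sq_abs η,
    sq_nonneg (|x - γ| - |η|)]

lemma intervalIntegral_eq_zero_of_odd {E : Type*} [NormedAddCommGroup E] [NormedSpace ℝ E]
    {f : ℝ → E} (hf : ∀ x, f (-x) = -f x) (R : ℝ) : ∫ x in -R..R, f x = 0 := by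
  have h : ∫ x in -R..R, f x = -∫ x in -R..R, f x := calc
    ∫ x in -R..R, f x = ∫ x in -R..R, f (-x) := by
      rw [intervalIntegral.integral_comp_neg, neg_neg]
    _ = -∫ x in -R..R, f x := by simp_rw [hf, intervalIntegral.integral_neg]
  rw [eq_neg_iff_add_eq_zero, ← two_smul ℝ] at h
  exact (smul_eq_zero.1 h).resolve_left two_ne_zero

lemma integral_resolventIm (γ x R : ℝ) : ∫ η in -R..R, resolventIm γ η x = 0 :=
  intervalIntegral_eq_zero_of_odd (fun η ↦ by simp only [resolventIm, neg_sq, neg_div]) R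

lemma integral_resolventRe {γ x : ℝ} (hx : x ≠ γ) (R : ℝ) :
    ∫ η in -R..R, resolventRe γ η x = 2 * arctan (R / (x - γ)) := by
  have hc : x - γ ≠ 0 := sub_ne_zero.2 hx
  have h : ∀ η, resolventRe γ η x = (x - γ)⁻¹ * (1 + (η / (x - γ)) ^ 2)⁻¹ := fun η ↦ by
    have := sub_sq_add_sq_pos hx η
    rw [resolventRe]
    field_simp
  simp_rw [h, intervalIntegral.integral_const_mul,
    intervalIntegral.inv_mul_integral_comp_div (f := fun t ↦ (1 + t ^ 2)⁻¹),
    integral_inv_one_add_sq, neg_div, arctan_neg]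
  ring

namespace Real

lemma arctan_le_self {x : ℝ} (hx : 0 ≤ x) : arctan x ≤ x := by
  simpa using le_tan (arctan_nonneg.2 hx) (arctan_lt_pi_div_two x)

lemma abs_arctan_le (x : ℝ) : |arctan x| ≤ |x| := by
  rcases le_total 0 x with hx | hx
  · rw [abs_of_nonneg (arctan_nonneg.2 hx), abs_of_nonneg hx]
    exact arctan_le_self hx
  · rw [← abs_neg, ← arctan_neg, ← abs_neg x, abs_of_nonneg (arctan_nonneg.2 (neg_nonneg.2 hx)),
      abs_of_nonneg (neg_nonneg.2 hx)]
    exact arctan_le_self (neg_nonneg.2 hx)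

end Real

lemma abs_inv_pi_mul_arctan_div_sub_le {c : ℝ} (hc : c ≠ 0) {R : ℝ} (hR : 0 < R) :
    |π⁻¹ * arctan (R / c) - (1 / 2 - if c < 0 then 1 else 0)| ≤ |c| / R := by
  have h : π⁻¹ * arctan (R / c) - (1 / 2 - if c < 0 then 1 else 0) = -(π⁻¹ * arctan (c / R)) := by
    rw [← inv_div]
    rcases hc.lt_or_gt with hc | hc
    · rw [arctan_inv_of_neg (div_neg_of_neg_of_pos hc hR), if_pos hc]
      field_simp
      ring
    · rw [arctan_inv_of_pos (div_pos hc hR), if_neg hc.not_gt]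
      field_simp
      ring
  rw [h, abs_neg, abs_mul, abs_inv, abs_of_pos pi_pos]
  calc π⁻¹ * |arctan (c / R)| ≤ 1 * |c / R| :=
        mul_le_mul (inv_le_one_of_one_le₀ (by linarith [pi_gt_three])) (abs_arctan_le _)
          (abs_nonneg _) zero_le_one
    _ = |c| / R := by rw [one_mul, abs_div, abs_of_pos hR]

lemma continuousOn_ite_lt_of_notMem {γ : ℝ} {s : Set ℝ} (hγ : γ ∉ s) :
    ContinuousOn (fun x : ℝ ↦ if x < γ then (1 : ℝ) else 0) s := by
  refine ContinuousOn.if (fun x hx ↦ ?_) continuousOn_const continuousOn_const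
  have hxγ : x ∈ frontier (Iio γ) := hx.2
  rw [frontier_Iio] at hxγ
  exact absurd hxγ (ne_of_mem_of_not_mem hx.1 hγ)

lemma tendstoUniformlyOn_inv_pi_mul_arctan {γ : ℝ} {s : Set ℝ} (hs : IsCompact s) (hγ : γ ∉ s) :
    TendstoUniformlyOn (fun R x ↦ π⁻¹ * arctan (R / (x - γ)))
      (fun x ↦ 1 / 2 - if x < γ then 1 else 0) atTop s := by
  obtain ⟨M, hM⟩ := hs.exists_bound_of_continuousOn (f := fun x ↦ x - γ) (by fun_prop)
  rw [Metric.tendstoUniformlyOn_iff]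
  intro ε hε
  filter_upwards [eventually_gt_atTop 0, eventually_gt_atTop (M / ε)] with R hR hRM x hx
  rw [dist_comm, Real.dist_eq]
  calc _ ≤ |x - γ| / R := by
        simpa only [sub_neg] using
          abs_inv_pi_mul_arctan_div_sub_le (sub_ne_zero.2 (ne_of_mem_of_not_mem hx hγ)) hR
    _ ≤ M / R := by gcongr; simpa using hM x hx
    _ < ε := by rwa [div_lt_iff₀ hR, mul_comm, ← div_lt_iff₀ hε]

lemma continuousOn_arctan_div_sub {γ : ℝ} {s : Set ℝ} (hγ : γ ∉ s) (R : ℝ) :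
    ContinuousOn (fun x ↦ arctan (R / (x - γ))) s :=
  continuous_arctan.comp_continuousOn <|
    continuousOn_const.div (by fun_prop) fun x hx ↦ sub_ne_zero.2 (ne_of_mem_of_not_mem hx hγ)

section CStarAlgebra

variable {𝒜 : Type*} [CStarAlgebra 𝒜] {a : 𝒜} {γ : ℝ}

lemma tendsto_cfc_inv_pi_mul_arctan (hγ : γ ∉ spectrum ℝ a) :
    Tendsto (fun R ↦ cfc (fun x ↦ π⁻¹ * arctan (R / (x - γ))) a) atTop
      (nhds (cfc (fun x ↦ 1 / 2 - if x < γ then 1 else 0) a)) :=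
  tendsto_cfc_fun
    (tendstoUniformlyOn_inv_pi_mul_arctan (ContinuousFunctionalCalculus.isCompact_spectrum a) hγ)
    (.of_forall fun R ↦ continuousOn_const.mul (continuousOn_arctan_div_sub hγ R))

lemma sub_smul_one_mul_cfc_resolvent (ha : IsSelfAdjoint a) (hγ : γ ∉ spectrum ℝ a) (η : ℝ) :
    (a - ((γ : ℂ) - η * Complex.I) • 1) *
      (cfc (resolventRe γ η) a + Complex.I • cfc (resolventIm γ η) a) = 1 := by
  have hre : ContinuousOn (resolventRe γ η) (spectrum ℝ a) :=
    (continuousOn_uncurry_resolventRe hγ).comp (Continuous.prodMk_right η).continuousOn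
      fun _ hx ↦ ⟨mem_univ _, hx⟩
  have him : ContinuousOn (resolventIm γ η) (spectrum ℝ a) :=
    (continuousOn_uncurry_resolventIm hγ).comp (Continuous.prodMk_right η).continuousOn
      fun _ hx ↦ ⟨mem_univ _, hx⟩
  set u := cfc (resolventRe γ η) a
  set v := cfc (resolventIm γ η) a
  have hu : a * u - (γ : ℂ) • u - (η : ℂ) • v = 1 := by
    have : cfc (fun x ↦ x * resolventRe γ η x - γ * resolventRe γ η x - η * resolventIm γ η x) a
        = 1 := by
      rw [← cfc_one ℝ a]
      refine cfc_congr fun x hx ↦ ?_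
      have := sub_sq_add_sq_pos (ne_of_mem_of_not_mem hx hγ) η
      simp only [resolventRe, resolventIm, Pi.one_apply]
      field_simp
      ring
    rwa [cfc_sub .., cfc_sub .., cfc_mul .., cfc_id' .., cfc_const_mul .., cfc_const_mul ..,
      ← Complex.coe_smul, ← Complex.coe_smul] at this
  have hv : a * v - (γ : ℂ) • v + (η : ℂ) • u = 0 := by
    have : cfc (fun x ↦ x * resolventIm γ η x - γ * resolventIm γ η x + η * resolventRe γ η x) a
        = 0 := by
      rw [← cfc_zero ℝ a]
      refine cfc_congr fun x hx ↦ ?_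
      have := sub_sq_add_sq_pos (ne_of_mem_of_not_mem hx hγ) η
      simp only [resolventRe, resolventIm, Pi.zero_apply]
      field_simp
      ring
    rwa [cfc_add .., cfc_sub .., cfc_mul .., cfc_id' .., cfc_const_mul .., cfc_const_mul ..,
      ← Complex.coe_smul, ← Complex.coe_smul] at this
  -- `(a - γ + iη)(u + iv) = (au - γu - ηv) + i(av - γv + ηu)`
  simp only [mul_add, sub_mul, mul_smul_comm, smul_mul_assoc, one_mul]
  linear_combination (norm := module) hu + Complex.I • hv + Complex.I_mul_I • ((η : ℂ) • v)

lemma notMem_spectrum_of_le_abs_sub {δ : ℝ} (hδ : 0 < δ)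
    (hspec : ∀ x ∈ spectrum ℝ a, δ ≤ |x - γ|) : γ ∉ spectrum ℝ a := fun h ↦ by
  simpa [hδ.not_ge] using hspec γ h

lemma intervalIntegrable_cfc {f : ℝ → ℝ → ℝ} {C : ℝ}
    (hf : ContinuousOn (uncurry f) (univ ×ˢ spectrum ℝ a))
    (hC : ∀ η, ∀ x ∈ spectrum ℝ a, |f η x| ≤ C) (ha : IsSelfAdjoint a) (b₁ b₂ : ℝ) :
    IntervalIntegrable (fun η ↦ cfc (f η) a) volume b₁ b₂ := by
  rw [intervalIntegrable_iff]
  have : IsFiniteMeasure (volume.restrict (uIoc b₁ b₂)) :=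
    isFiniteMeasure_restrict.2 measure_Ioc_lt_top.ne
  exact integrableOn_cfc measurableSet_uIoc f (fun _ ↦ C) a
    (hf.mono (prod_mono (subset_univ _) le_rfl)) (.of_forall fun η x hx ↦ hC η x hx)
    (hasFiniteIntegral_const C) ha

lemma intervalIntegral_cfc {f : ℝ → ℝ → ℝ} {C : ℝ}
    (hf : ContinuousOn (uncurry f) (univ ×ˢ spectrum ℝ a))
    (hC : ∀ η, ∀ x ∈ spectrum ℝ a, |f η x| ≤ C) (ha : IsSelfAdjoint a) {b₁ b₂ : ℝ}
    (hb : b₁ ≤ b₂) :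
    ∫ η in b₁..b₂, cfc (f η) a = cfc (fun x ↦ ∫ η in b₁..b₂, f η x) a := by
  simp_rw [intervalIntegral.integral_of_le hb]
  exact (cfc_setIntegral measurableSet_Ioc f (fun _ ↦ C) a
    (hf.mono (prod_mono (subset_univ _) le_rfl)) (.of_forall fun η x hx ↦ hC η x hx)
    (hasFiniteIntegral_const C) ha).symm

variable {δ : ℝ} (ha : IsSelfAdjoint a) (hδ : 0 < δ) (hspec : ∀ x ∈ spectrum ℝ a, δ ≤ |x - γ|)
include ha hδ hspec

lemma intervalIntegrable_cfc_resolvent (b₁ b₂ : ℝ) :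
    IntervalIntegrable (fun η ↦ cfc (resolventRe γ η) a + Complex.I • cfc (resolventIm γ η) a)
      volume b₁ b₂ := by
  have hγ := notMem_spectrum_of_le_abs_sub hδ hspec
  exact (intervalIntegrable_cfc (continuousOn_uncurry_resolventRe hγ)
    (fun η x hx ↦ abs_resolventRe_le hδ (hspec x hx) η) ha b₁ b₂).add
    ((intervalIntegrable_cfc (continuousOn_uncurry_resolventIm hγ)
      (fun η x hx ↦ abs_resolventIm_le hδ (hspec x hx) η) ha b₁ b₂).smul Complex.I)

lemma intervalIntegral_cfc_resolvent {R : ℝ} (hR : 0 ≤ R) :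
    ∫ η in -R..R, (cfc (resolventRe γ η) a + Complex.I • cfc (resolventIm γ η) a)
      = cfc (fun x ↦ 2 * arctan (R / (x - γ))) a := by
  have hγ := notMem_spectrum_of_le_abs_sub hδ hspec
  have hre := continuousOn_uncurry_resolventRe hγ
  have him := continuousOn_uncurry_resolventIm hγ
  have hreC := fun η x hx ↦ abs_resolventRe_le (γ := γ) hδ (hspec x hx) η
  have himC := fun η x hx ↦ abs_resolventIm_le (γ := γ) hδ (hspec x hx) η
  have him' : IntervalIntegrable (fun η ↦ Complex.I • cfc (resolventIm γ η) a) volume (-R) R :=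
    (intervalIntegrable_cfc him himC ha _ _).smul Complex.I
  rw [intervalIntegral.integral_add (intervalIntegrable_cfc hre hreC ha _ _) him',
    intervalIntegral.integral_smul, intervalIntegral_cfc hre hreC ha (by linarith),
    intervalIntegral_cfc him himC ha (by linarith)]
  simp_rw [integral_resolventIm, cfc_const_zero, smul_zero, add_zero]
  exact cfc_congr fun x hx ↦ integral_resolventRe (ne_of_mem_of_not_mem hx hγ) R

end CStarAlgebra

/-- Cauchy/resolvent representation of the spectral projection: if `A` is
self-adjoint with `dist(γ, σ(A)) ≥ δ > 0`, and `Res η` denotes the resolvent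
`(A − γ + iη)^{−1}`, then for every vector `ψ` the strong improper integral
`(1/2π)∫ (A − γ + iη)^{−1} ψ dη` converges to `(1/2 − P)ψ`, where
`P = χ_{(−∞,γ)}(A)` is the spectral projection below `γ` (realized here through the
continuous functional calculus, the indicator being continuous on `σ(A)`). -/
theorem cauchy_formula_spectral_projection {H : Type*} [NormedAddCommGroup H]
    [InnerProductSpace ℂ H] [CompleteSpace H]
    (A : H →L[ℂ] H) (hA : IsSelfAdjoint A)
    (γ δ : ℝ) (hδ : 0 < δ)
    (hspec : ∀ x ∈ spectrum ℝ A, δ ≤ |x - γ|)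
    (Res : ℝ → H →L[ℂ] H)
    (hRes : ∀ η : ℝ,
      (A - ((γ : ℂ) - (η : ℂ) * Complex.I) • 1) * Res η = 1 ∧
      Res η * (A - ((γ : ℂ) - (η : ℂ) * Complex.I) • 1) = 1) :
    ∀ ψ : H,
      Tendsto (fun R : ℝ => (1 / (2 * Real.pi)) • ∫ η in (-R)..R, Res η ψ)
        atTop
        (nhds (((1 : ℝ) / 2) • ψ -
          cfc (fun x : ℝ => if x < γ then (1 : ℝ) else 0) A ψ)) := by
  intro ψ
  have hγ := notMem_spectrum_of_le_abs_sub hδ hspec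
  obtain rfl : Res = fun η ↦ cfc (resolventRe γ η) A + Complex.I • cfc (resolventIm γ η) A :=
    funext fun η ↦ left_inv_eq_right_inv (hRes η).2 (sub_smul_one_mul_cfc_resolvent hA hγ η)
  have htarget : (((1 : ℝ) / 2) • ψ - cfc (fun x : ℝ => if x < γ then (1 : ℝ) else 0) A ψ)
      = cfc (fun x ↦ 1 / 2 - if x < γ then 1 else 0) A ψ := by
    rw [cfc_sub (fun _ ↦ (1 / 2 : ℝ)) _ A continuousOn_const (continuousOn_ite_lt_of_notMem hγ),
      cfc_const _ _ hA, Algebra.algebraMap_eq_smul_one]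
    rfl
  rw [htarget]
  refine (((ContinuousLinearMap.apply ℂ H ψ).continuous.tendsto _).comp
    (tendsto_cfc_inv_pi_mul_arctan hγ)).congr' ((eventually_ge_atTop 0).mono fun R hR ↦ ?_)
  dsimp only [Function.comp_apply, ContinuousLinearMap.apply_apply]
  rw [← ContinuousLinearMap.intervalIntegral_apply
      (intervalIntegrable_cfc_resolvent hA hδ hspec _ _),
    intervalIntegral_cfc_resolvent hA hδ hspec hR, ← smul_apply,
    ← cfc_const_mul _ (fun x ↦ 2 * arctan (R / (x - γ))) A
      (continuousOn_const.mul (continuousOn_arctan_div_sub hγ R))]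
  congr 1
  refine cfc_congr fun x _ ↦ ?_
  field_simp
end
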